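/- Combinatorial form of the Betti inequality: for X a simplicial complex on [n], b ∈ {0,1}^n and any i, dim_k H̃_i(X_b; k) ≤ Σ_{F ∩ supp(b) = ∅, F ∈ X} dim_k H̃_i(lk(F, X); k). -/

import Mathlib

open Finset
open scoped Classical

/-- A (finite abstract) simplicial complex on vertex set `[n]`, modeled as a
set of finsets of `Fin n`. -/
abbrev SComplex (n : ℕ) := Set (Finset (Fin n))

/-- `X` is a simplicial complex: closed under taking subsets. -/
def IsSComplex {n : ℕ} (X : SComplex n) : Prop := ∀ F ∈ X, ∀ G ⊆ F, G ∈ X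

/-- Alexander dual complex `X^∨ = {F | Fᶜ ∉ X}`. -/
def dualC {n : ℕ} (X : SComplex n) : SComplex n := {F | Fᶜ ∉ X}

/-- Link of a face `F` in `X`. -/
def linkC {n : ℕ} (F : Finset (Fin n)) (X : SComplex n) : SComplex n :=
  {G | F ∪ G ∈ X ∧ F ∩ G = ∅}

/-- Star of a face `F` in `X`. -/
def starC {n : ℕ} (F : Finset (Fin n)) (X : SComplex n) : SComplex n :=
  {G | F ∪ G ∈ X}

/-- Full subcomplex of `X` on the vertex set `b`. -/
def restC {n : ℕ} (X : SComplex n) (b : Finset (Fin n)) : SComplex n :=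
  {F | F ∈ X ∧ F ⊆ b}

/-- Faces of `X` of cardinality `m` (so of dimension `m - 1`). -/
def Faces {n : ℕ} (X : SComplex n) (m : ℤ) : Type :=
  {F : Finset (Fin n) // F ∈ X ∧ (F.card : ℤ) = m}

instance {n : ℕ} (X : SComplex n) (m : ℤ) : Finite (Faces X m) :=
  Subtype.finite

/-- The simplicial boundary map on (reduced, oriented) chains with coefficients in `R`:
from chains in simplicial dimension `d` (faces of cardinality `d+1`) to chains in
dimension `d-1`.  `(∂ f) G = ∑_v ± f (insert v G)`. -/
noncomputable def chainBd (R : Type) [CommRing R] {n : ℕ} (X : SComplex n) (d : ℤ) :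
    (Faces X (d + 1) → R) →ₗ[R] (Faces X d → R) where
  toFun f G := ∑ v : Fin n,
    if h : v ∉ G.1 ∧ insert v G.1 ∈ X then
      ((-1 : R) ^ (G.1.filter (· < v)).card) *
        f ⟨insert v G.1, h.2, by
          have := G.2.2
          rw [Finset.card_insert_of_notMem h.1]
          push_cast
          omega⟩
    else 0
  map_add' f g := by
    funext G
    rw [Pi.add_apply, ← Finset.sum_add_distrib]
    refine Finset.sum_congr rfl fun v _ => ?_
    split_ifs with h
    · exact mul_add _ _ _
    · simp
  map_smul' c f := by
    funext G
    rw [Pi.smul_apply, smul_eq_mul, Finset.mul_sum]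
    apply Finset.sum_congr rfl
    intro v _
    split_ifs with h
    · exact mul_left_comm _ _ _
    · simp

/-- The reduced simplicial homology of `X` in dimension `d`, with coefficients in `R`,
as a module: cycles modulo boundaries. -/
noncomputable def hredMod (R : Type) [CommRing R] {n : ℕ} (X : SComplex n) (d : ℤ) :=
  LinearMap.ker (chainBd R X d) ⧸
    Submodule.comap (LinearMap.ker (chainBd R X d)).subtype
      (LinearMap.range (chainBd R X (d + 1)))

/-- The dimension of the reduced simplicial homology `H̃_d(X; k)` over a field `k`
(computed as `dim ker ∂_d - dim im ∂_{d+1}`). -/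
noncomputable def hred (k : Type) [Field k] {n : ℕ} (X : SComplex n) (d : ℤ) : ℕ :=
  Module.finrank k (LinearMap.ker (chainBd k X d)) -
    Module.finrank k (LinearMap.range (chainBd k X (d + 1)))



-- ==================== auxiliary development ====================

namespace BettiAux

variable {n : ℕ}

/-- Deletion of a vertex. -/
def delC (v : Fin n) (X : SComplex n) : SComplex n := {F | F ∈ X ∧ v ∉ F}

@[simp] lemma mem_delC {v : Fin n} {X : SComplex n} {F : Finset (Fin n)} :
    F ∈ delC v X ↔ F ∈ X ∧ v ∉ F := Iff.rfl

@[simp] lemma mem_linkC {F G : Finset (Fin n)} {X : SComplex n} :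
    G ∈ linkC F X ↔ F ∪ G ∈ X ∧ F ∩ G = ∅ := Iff.rfl

@[simp] lemma mem_restC {b F : Finset (Fin n)} {X : SComplex n} :
    F ∈ restC X b ↔ F ∈ X ∧ F ⊆ b := Iff.rfl

lemma isc_delC {v : Fin n} {X : SComplex n} (hX : IsSComplex X) : IsSComplex (delC v X) :=
  fun F hF G hG => ⟨hX F hF.1 G hG, fun hv => hF.2 (hG hv)⟩

lemma isc_linkC {F : Finset (Fin n)} {X : SComplex n} (hX : IsSComplex X) :
    IsSComplex (linkC F X) := by
  intro G hG G' hG'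
  refine ⟨hX _ hG.1 _ (Finset.union_subset_union_right hG'), ?_⟩
  exact Finset.subset_empty.mp (hG.2 ▸ Finset.inter_subset_inter (Finset.Subset.refl F) hG')

lemma isc_restC {b : Finset (Fin n)} {X : SComplex n} (hX : IsSComplex X) :
    IsSComplex (restC X b) :=
  fun F hF G hG => ⟨hX F hF.1 G hG, hG.trans hF.2⟩

section Chain

variable (k : Type) [Field k]

/-- Extension by zero of a chain to all finsets. -/
noncomputable def extc (X : SComplex n) (m : ℤ) (f : Faces X m → k) (S : Finset (Fin n)) : k :=
  if h : S ∈ X ∧ (S.card : ℤ) = m then f ⟨S, h⟩ else 0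

lemma extc_coe {X : SComplex n} {m : ℤ} (f : Faces X m → k) (F : Faces X m) :
    extc k X m f F.1 = f F := by
  rw [extc, dif_pos F.2]
  exact congrArg f (Subtype.ext rfl)

lemma chainBd_apply (X : SComplex n) (d : ℤ) (f : Faces X (d+1) → k) (G : Faces X d) :
    chainBd k X d f G = ∑ u : Fin n,
      if u ∉ G.1 ∧ insert u G.1 ∈ X then
        ((-1 : k) ^ (G.1.filter (· < u)).card) * extc k X (d+1) f (insert u G.1)
      else 0 := by
  show ∑ u : Fin n, _ = _
  refine Finset.sum_congr rfl fun u _ => ?_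
  by_cases h : u ∉ G.1 ∧ insert u G.1 ∈ X
  · rw [dif_pos h, if_pos h]
    congr 1
    rw [extc, dif_pos]
  · rw [dif_neg h, if_neg h]

lemma filter_lt_insert (G : Finset (Fin n)) (u w : Fin n) (hu : u ∉ G) :
    ((insert u G).filter (· < w)).card = (G.filter (· < w)).card + if u < w then 1 else 0 := by
  rw [Finset.filter_insert]
  split_ifs with h
  · rw [Finset.card_insert_of_notMem (fun hc => hu (Finset.mem_of_mem_filter u hc))]
  · rfl

lemma sq_zero (X : SComplex n) (hX : IsSComplex X) (d : ℤ) :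
    (chainBd k X d).comp (chainBd k X (d + 1)) = 0 := by
  apply LinearMap.ext; intro f
  funext G
  show chainBd k X d (chainBd k X (d+1) f) G = 0
  rw [chainBd_apply]
  have hterm : ∀ u : Fin n,
      (if u ∉ G.1 ∧ insert u G.1 ∈ X then
        ((-1 : k) ^ (G.1.filter (· < u)).card) * extc k X (d+1) (chainBd k X (d+1) f) (insert u G.1)
      else 0)
      = ∑ w : Fin n,
        (if (u ∉ G.1 ∧ insert u G.1 ∈ X) ∧ (w ∉ insert u G.1 ∧ insert w (insert u G.1) ∈ X) then
          ((-1 : k) ^ (G.1.filter (· < u)).card) *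
            (((-1 : k) ^ ((insert u G.1).filter (· < w)).card) *
              extc k X (d+1+1) f (insert w (insert u G.1)))
        else 0) := by
    intro u
    by_cases h : u ∉ G.1 ∧ insert u G.1 ∈ X
    · rw [if_pos h]
      have hcard : ((insert u G.1).card : ℤ) = d + 1 := by
        rw [Finset.card_insert_of_notMem h.1]; have := G.2.2; push_cast; omega
      rw [extc, dif_pos ⟨h.2, hcard⟩]
      erw [chainBd_apply]; rw [Finset.mul_sum]
      refine Finset.sum_congr rfl fun w _ => ?_
      by_cases h2 : w ∉ insert u G.1 ∧ insert w (insert u G.1) ∈ X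
      · rw [if_pos h2, if_pos ⟨h, h2⟩]
      · rw [if_neg h2, if_neg (fun hc => h2 hc.2), mul_zero]
    · rw [if_neg h]
      rw [Finset.sum_congr rfl fun w _ => if_neg (fun hc => h hc.1)]
      simp
  rw [Finset.sum_congr rfl fun u _ => hterm u, ← Finset.sum_product']
  have key : ∀ u w : Fin n,
      (if (u ∉ G.1 ∧ insert u G.1 ∈ X) ∧ (w ∉ insert u G.1 ∧ insert w (insert u G.1) ∈ X) then
        ((-1 : k) ^ (G.1.filter (· < u)).card) *
          (((-1 : k) ^ ((insert u G.1).filter (· < w)).card) *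
            extc k X (d+1+1) f (insert w (insert u G.1)))
      else 0)
      + (if (w ∉ G.1 ∧ insert w G.1 ∈ X) ∧ (u ∉ insert w G.1 ∧ insert u (insert w G.1) ∈ X) then
        ((-1 : k) ^ (G.1.filter (· < w)).card) *
          (((-1 : k) ^ ((insert w G.1).filter (· < u)).card) *
            extc k X (d+1+1) f (insert u (insert w G.1)))
      else 0) = 0 := by
    intro u w
    by_cases huw : u = w
    · subst huw
      rw [if_neg (fun hc => hc.2.1 (Finset.mem_insert_self u G.1))]
      simp
    · by_cases hc : (u ∉ G.1 ∧ insert u G.1 ∈ X) ∧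
          (w ∉ insert u G.1 ∧ insert w (insert u G.1) ∈ X)
      · obtain ⟨⟨hu, hux⟩, hw, hwx⟩ := hc
        have hwG : w ∉ G.1 := fun hc => hw (Finset.mem_insert_of_mem hc)
        have hcomm : insert w (insert u G.1) = insert u (insert w G.1) := Finset.insert_comm _ _ _
        have hwx' : insert w G.1 ∈ X := by
          refine hX _ hwx _ ?_
          intro x hx
          rcases Finset.mem_insert.mp hx with h | h
          · exact h ▸ Finset.mem_insert_self _ _
          · exact Finset.mem_insert_of_mem (Finset.mem_insert_of_mem h)
        have huw' : u ∉ insert w G.1 := by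
          rw [Finset.mem_insert]; push_neg; exact ⟨huw, hu⟩
        rw [if_pos ⟨⟨hu, hux⟩, hw, hwx⟩, if_pos ⟨⟨hwG, hwx'⟩, huw', hcomm ▸ hwx⟩]
        rw [filter_lt_insert _ _ _ hu, filter_lt_insert _ _ _ hwG, hcomm]
        rcases lt_trichotomy u w with h | h | h
        · rw [if_pos h, if_neg (not_lt.mpr h.le)]
          ring
        · exact absurd h huw
        · rw [if_pos h, if_neg (not_lt.mpr h.le)]
          ring
      · have hc2 : ¬ ((w ∉ G.1 ∧ insert w G.1 ∈ X) ∧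
            (u ∉ insert w G.1 ∧ insert u (insert w G.1) ∈ X)) := by
          rintro ⟨⟨hw, hwx⟩, hu, hux⟩
          apply hc
          have huG : u ∉ G.1 := fun hcc => hu (Finset.mem_insert_of_mem hcc)
          have hcomm : insert u (insert w G.1) = insert w (insert u G.1) := Finset.insert_comm _ _ _
          have hux' : insert u G.1 ∈ X := by
            refine hX _ hux _ ?_
            intro x hx
            rcases Finset.mem_insert.mp hx with h | h
            · exact h ▸ Finset.mem_insert_self _ _
            · exact Finset.mem_insert_of_mem (Finset.mem_insert_of_mem h)
          have hwu' : w ∉ insert u G.1 := by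
            rw [Finset.mem_insert]; push_neg; exact ⟨fun hh => huw hh.symm, hw⟩
          exact ⟨⟨huG, hux'⟩, hwu', hcomm ▸ hux⟩
        rw [if_neg hc, if_neg hc2, add_zero]
  have diag : ∀ u w : Fin n, u = w →
      (if (u ∉ G.1 ∧ insert u G.1 ∈ X) ∧ (w ∉ insert u G.1 ∧ insert w (insert u G.1) ∈ X) then
        ((-1 : k) ^ (G.1.filter (· < u)).card) *
          (((-1 : k) ^ ((insert u G.1).filter (· < w)).card) *
            extc k X (d+1+1) f (insert w (insert u G.1)))
      else 0) = 0 := by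
    intro u w h
    subst h
    rw [if_neg]
    rintro ⟨-, h2, -⟩
    exact h2 (Finset.mem_insert_self u _)
  refine Finset.sum_involution (fun p _ => (p.2, p.1)) (fun p _ => key p.1 p.2) ?_
    (fun p _ => Finset.mem_product.mpr ⟨Finset.mem_univ _, Finset.mem_univ _⟩) (fun p _ => rfl)
  intro p _ hp hfix
  exact hp (diag p.1 p.2 (congrArg Prod.snd hfix))

end Chain

end BettiAux

-- ==================== cone decomposition ====================

namespace BettiAux

variable {n : ℕ}

lemma singleton_inter_empty_iff {v : Fin n} {G : Finset (Fin n)} :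
    {v} ∩ G = ∅ ↔ v ∉ G := by
  constructor
  · intro h hv
    have : v ∈ {v} ∩ G := Finset.mem_inter.mpr ⟨Finset.mem_singleton_self v, hv⟩
    simp [h] at this
  · exact Finset.singleton_inter_of_notMem

lemma mem_linkv_iff {v : Fin n} {X : SComplex n} {G : Finset (Fin n)} :
    G ∈ linkC {v} X ↔ insert v G ∈ X ∧ v ∉ G := by
  rw [mem_linkC, ← Finset.insert_eq, singleton_inter_empty_iff]

lemma linkv_subset_delC {v : Fin n} {X : SComplex n} (hX : IsSComplex X) :
    ∀ G ∈ linkC {v} X, G ∈ delC v X := by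
  intro G hG
  rw [mem_linkv_iff] at hG
  exact ⟨hX _ hG.1 _ (Finset.subset_insert v G), hG.2⟩

lemma card_insert_int {v : Fin n} {G : Finset (Fin n)} (h : v ∉ G) {m : ℤ}
    (hc : (G.card : ℤ) = m) : ((insert v G).card : ℤ) = m + 1 := by
  rw [Finset.card_insert_of_notMem h]; push_cast; omega

lemma card_erase_int {v : Fin n} {G : Finset (Fin n)} (h : v ∈ G) {m : ℤ}
    (hc : (G.card : ℤ) = m + 1) : ((G.erase v).card : ℤ) = m := by
  rw [Finset.card_erase_of_mem h]
  have : G.card ≠ 0 := Finset.card_ne_zero_of_mem h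
  omega

section ConeMaps

variable (k : Type) [Field k] (v : Fin n) (X : SComplex n)

lemma extc_add (m : ℤ) (f g : Faces X m → k) (S : Finset (Fin n)) :
    extc k X m (f + g) S = extc k X m f S + extc k X m g S := by
  rw [extc, extc, extc]
  split_ifs with h
  · rfl
  · rw [add_zero]

lemma extc_smul (m : ℤ) (c : k) (f : Faces X m → k) (S : Finset (Fin n)) :
    extc k X m (c • f) S = c * extc k X m f S := by
  rw [extc, extc]
  split_ifs with h
  · rfl
  · rw [mul_zero]

/-- Sign `(-1)^#{u ∈ S : u < v}`. -/
noncomputable def epsv (S : Finset (Fin n)) : k := (-1 : k) ^ (S.filter (· < v)).card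

lemma epsv_sq (S : Finset (Fin n)) : epsv k v S * epsv k v S = 1 := by
  rw [epsv, ← pow_add]
  exact Even.neg_one_pow ⟨_, rfl⟩

/-- Extension by zero from chains of the link to chains of the deletion. -/
noncomputable def jD (m : ℤ) :
    (Faces (linkC {v} X) m → k) →ₗ[k] (Faces (delC v X) m → k) where
  toFun g H := extc k (linkC {v} X) m g H.1
  map_add' f g := by funext H; exact extc_add k _ m f g H.1
  map_smul' c f := by funext H; exact extc_smul k _ m c f H.1

lemma jD_extc (m : ℤ) (g : Faces (linkC {v} X) m → k) (H : Faces (delC v X) m) :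
    jD k v X m g H = extc k (linkC {v} X) m g H.1 := rfl

lemma extc_jD (hX : IsSComplex X) (m : ℤ) (g : Faces (linkC {v} X) m → k)
    (S : Finset (Fin n)) :
    extc k (delC v X) m (jD k v X m g) S = extc k (linkC {v} X) m g S := by
  by_cases h : S ∈ delC v X ∧ (S.card : ℤ) = m
  · rw [extc, dif_pos h]; erw [jD_extc]
  · rw [extc, dif_neg h, extc, dif_neg]
    intro hc
    exact h ⟨linkv_subset_delC hX _ hc.1, hc.2⟩

/-- `∂_B ∘ j = j ∘ ∂_A` : extension by zero is a chain map. -/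
lemma jD_chain (hX : IsSComplex X) (m : ℤ) :
    (chainBd k (delC v X) m).comp (jD k v X (m+1)) =
      (jD k v X m).comp (chainBd k (linkC {v} X) m) := by
  have hA : IsSComplex (linkC {v} X) := isc_linkC hX
  apply LinearMap.ext; intro g
  funext H
  show chainBd k (delC v X) m (jD k v X (m+1) g) H = jD k v X m (chainBd k (linkC {v} X) m g) H
  rw [chainBd_apply, jD_extc]
  by_cases hH : H.1 ∈ linkC {v} X
  · rw [extc, dif_pos ⟨hH, H.2.2⟩]; erw [chainBd_apply]
    refine Finset.sum_congr rfl fun u _ => ?_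
    rw [extc_jD k v X hX]
    by_cases hc : u ∉ H.1 ∧ insert u H.1 ∈ delC v X
    · rw [if_pos hc]
      by_cases hc2 : insert u H.1 ∈ linkC {v} X
      · rw [if_pos ⟨hc.1, hc2⟩]
      · rw [if_neg (fun hcc => hc2 hcc.2), extc, dif_neg (fun hcc => hc2 hcc.1), mul_zero]
    · rw [if_neg hc, if_neg]
      intro hcc
      exact hc ⟨hcc.1, linkv_subset_delC hX _ hcc.2⟩
  · rw [extc, dif_neg (fun hc => hH hc.1)]
    refine Finset.sum_eq_zero fun u _ => ?_
    by_cases hc : u ∉ H.1 ∧ insert u H.1 ∈ delC v X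
    · rw [if_pos hc, extc_jD k v X hX, extc, dif_neg, mul_zero]
      intro hcc
      exact hH (hA _ hcc.1 H.1 (Finset.subset_insert u H.1))
    · rw [if_neg hc]

/-- the `A`-component of the splitting. -/
noncomputable def piA (m : ℤ) :
    (Faces X (m+1) → k) →ₗ[k] (Faces (linkC {v} X) m → k) where
  toFun f G := epsv k v G.1 *
    f ⟨insert v G.1, (mem_linkv_iff.mp G.2.1).1,
        card_insert_int (mem_linkv_iff.mp G.2.1).2 G.2.2⟩
  map_add' f g := by
    funext G
    simp only [Pi.add_apply]
    exact mul_add _ _ _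
  map_smul' c f := by
    funext G
    simp only [Pi.smul_apply, smul_eq_mul, RingHom.id_apply]
    exact mul_left_comm _ _ _

/-- the `B`-component of the splitting. -/
noncomputable def piB (m : ℤ) :
    (Faces X m → k) →ₗ[k] (Faces (delC v X) m → k) where
  toFun f H := f ⟨H.1, H.2.1.1, H.2.2⟩
  map_add' f g := by funext H; rfl
  map_smul' c f := by funext H; rfl

lemma piA_apply (m : ℤ) (f : Faces X (m+1) → k) (G : Faces (linkC {v} X) m) :
    piA k v X m f G = epsv k v G.1 *
      f ⟨insert v G.1, (mem_linkv_iff.mp G.2.1).1,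
          card_insert_int (mem_linkv_iff.mp G.2.1).2 G.2.2⟩ := rfl

lemma piB_apply (m : ℤ) (f : Faces X m → k) (H : Faces (delC v X) m) :
    piB k v X m f H = f ⟨H.1, H.2.1.1, H.2.2⟩ := rfl

lemma extc_piA (m : ℤ) (f : Faces X (m+1) → k) (S : Finset (Fin n)) (hv : v ∉ S) :
    extc k (linkC {v} X) m (piA k v X m f) S =
      epsv k v S * extc k X (m+1) f (insert v S) := by
  by_cases h : S ∈ linkC {v} X ∧ (S.card : ℤ) = m
  · rw [extc, dif_pos h]; erw [piA_apply]; rw [extc,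
      dif_pos ⟨(mem_linkv_iff.mp h.1).1, card_insert_int hv h.2⟩]
  · rw [extc, dif_neg h, extc, dif_neg, mul_zero]
    intro hc
    refine h ⟨mem_linkv_iff.mpr ⟨hc.1, hv⟩, ?_⟩
    have := hc.2
    rw [Finset.card_insert_of_notMem hv] at this
    push_cast at this
    omega

lemma extc_piB (m : ℤ) (f : Faces X m → k) (S : Finset (Fin n)) (hv : v ∉ S) :
    extc k (delC v X) m (piB k v X m f) S = extc k X m f S := by
  by_cases h : S ∈ X ∧ (S.card : ℤ) = m
  · rw [extc, dif_pos ⟨mem_delC.mpr ⟨h.1, hv⟩, h.2⟩]; erw [piB_apply]; rw [extc, dif_pos h]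
  · rw [extc, dif_neg (fun hc => h ⟨hc.1.1, hc.2⟩), extc, dif_neg h]

/-- inverse of the splitting. -/
noncomputable def eXinv (m : ℤ) :
    ((Faces (linkC {v} X) m → k) × (Faces (delC v X) (m+1) → k)) →ₗ[k]
      (Faces X (m+1) → k) where
  toFun p G :=
    if h : v ∈ G.1 then
      epsv k v (G.1.erase v) *
        p.1 ⟨G.1.erase v,
          mem_linkv_iff.mpr ⟨by rw [Finset.insert_erase h]; exact G.2.1,
            Finset.notMem_erase v G.1⟩,
          card_erase_int h G.2.2⟩
    else p.2 ⟨G.1, ⟨G.2.1, h⟩, G.2.2⟩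
  map_add' p q := by
    funext G
    by_cases h : v ∈ G.1
    · simp only [dif_pos h, Prod.fst_add, Pi.add_apply, Prod.snd_add, mul_add]
      exact mul_add _ _ _
    · simp only [dif_neg h, Prod.fst_add, Pi.add_apply, Prod.snd_add]
      rfl
  map_smul' c p := by
    funext G
    by_cases h : v ∈ G.1
    · simp only [dif_pos h, Prod.smul_fst, Pi.smul_apply, smul_eq_mul, RingHom.id_apply]
      exact mul_left_comm _ _ _
    · simp only [dif_neg h, Prod.smul_snd, Pi.smul_apply, smul_eq_mul, RingHom.id_apply]
      rfl

lemma eXinv_apply (m : ℤ) (p) (G : Faces X (m+1)) :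
    eXinv k v X m p G =
      if h : v ∈ G.1 then
        epsv k v (G.1.erase v) *
          p.1 ⟨G.1.erase v,
            mem_linkv_iff.mpr ⟨by rw [Finset.insert_erase h]; exact G.2.1,
              Finset.notMem_erase v G.1⟩,
            card_erase_int h G.2.2⟩
      else p.2 ⟨G.1, ⟨G.2.1, h⟩, G.2.2⟩ := rfl

/-- The splitting of the chain spaces of `X` along the vertex `v`. -/
noncomputable def eX (m : ℤ) :
    (Faces X (m+1) → k) ≃ₗ[k]
      ((Faces (linkC {v} X) m → k) × (Faces (delC v X) (m+1) → k)) := by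
  refine LinearEquiv.ofLinear (LinearMap.prod (piA k v X m) (piB k v X (m+1)))
    (eXinv k v X m) ?_ ?_
  · apply LinearMap.ext; intro p
    refine Prod.ext ?_ ?_
    · funext G
      show piA k v X m (eXinv k v X m p) G = p.1 G
      erw [piA_apply, eXinv_apply, dif_pos (Finset.mem_insert_self v G.1)]
      have hvG : v ∉ G.1 := (mem_linkv_iff.mp G.2.1).2
      have he : (insert v G.1).erase v = G.1 := Finset.erase_insert hvG
      have heps : epsv k v ((insert v G.1).erase v) = epsv k v G.1 := by rw [he]
      rw [← mul_assoc, heps, epsv_sq, one_mul]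
      exact congrArg p.1 (Subtype.ext he)
    · funext H
      show piB k v X (m+1) (eXinv k v X m p) H = p.2 H
      erw [piB_apply, eXinv_apply, dif_neg H.2.1.2]
      exact congrArg p.2 (Subtype.ext rfl)
  · apply LinearMap.ext; intro f
    funext G
    show eXinv k v X m (piA k v X m f, piB k v X (m+1) f) G = f G
    rw [eXinv_apply]
    by_cases h : v ∈ G.1
    · rw [dif_pos h]
      dsimp only
      erw [piA_apply]; rw [← mul_assoc, epsv_sq, one_mul]
      exact congrArg f (Subtype.ext (Finset.insert_erase h))
    · rw [dif_neg h]
      dsimp only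
      erw [piB_apply]
      exact congrArg f (Subtype.ext rfl)

lemma eX_fst (m : ℤ) (f : Faces X (m+1) → k) : ((eX k v X m) f).1 = piA k v X m f := rfl
lemma eX_snd (m : ℤ) (f : Faces X (m+1) → k) : ((eX k v X m) f).2 = piB k v X (m+1) f := rfl

/-- The cone differential. -/
noncomputable def DXm (d : ℤ) :
    ((Faces (linkC {v} X) (d+1) → k) × (Faces (delC v X) (d+1+1) → k)) →ₗ[k]
      ((Faces (linkC {v} X) d → k) × (Faces (delC v X) (d+1) → k)) :=
  LinearMap.prod
    ((-(chainBd k (linkC {v} X) d)).comp (LinearMap.fst k _ _))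
    ((jD k v X (d+1)).comp (LinearMap.fst k _ _) +
      (chainBd k (delC v X) (d+1)).comp (LinearMap.snd k _ _))

lemma neg_one_pow_if (a : ℕ) (c : Prop) [Decidable c] :
    ((-1 : k) ^ (a + if c then 1 else 0)) = (-1 : k) ^ a * (if c then -1 else 1) := by
  split_ifs <;> simp [pow_succ]

/-- The key conjugation identity: under the splitting `eX`, the boundary operator of `X`
becomes the mapping-cone differential. -/
lemma conj (hX : IsSComplex X) (d : ℤ) :
    (eX k v X d).toLinearMap.comp (chainBd k X (d+1)) =
      (DXm k v X d).comp (eX k v X (d+1)).toLinearMap := by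
  apply LinearMap.ext; intro f
  refine Prod.ext ?_ ?_
  -- A component
  · show piA k v X d (chainBd k X (d+1) f) = -(chainBd k (linkC {v} X) d (piA k v X (d+1) f))
    funext G
    have hvG : v ∉ G.1 := (mem_linkv_iff.mp G.2.1).2
    rw [piA_apply]; erw [chainBd_apply]; rw [Finset.mul_sum, Pi.neg_apply, chainBd_apply, ← Finset.sum_neg_distrib]
    refine Finset.sum_congr rfl fun u _ => ?_
    by_cases huv : u = v
    · subst huv
      rw [if_neg, if_neg, mul_zero, neg_zero]
      · rintro ⟨-, hc⟩
        exact (mem_linkv_iff.mp hc).2 (Finset.mem_insert_self u G.1)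
      · rintro ⟨hc, -⟩
        exact hc (Finset.mem_insert_self u _)
    · by_cases hc : u ∉ G.1 ∧ insert u G.1 ∈ linkC {v} X
      · have hvu : v ∉ insert u G.1 := (mem_linkv_iff.mp hc.2).2
        have hcomm : insert u (insert v G.1) = insert v (insert u G.1) := Finset.insert_comm _ _ _
        have hcX : (¬ u ∈ insert v G.1) ∧ insert u (insert v G.1) ∈ X := by
          constructor
          · rw [Finset.mem_insert]
            push_neg
            exact ⟨huv, hc.1⟩
          · rw [hcomm]
            exact (mem_linkv_iff.mp hc.2).1
        rw [if_pos hcX, if_pos hc, extc_piA k v X _ _ _ hvu, hcomm]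
        rw [epsv, epsv, filter_lt_insert _ _ _ hvG, filter_lt_insert _ _ _ hc.1,
          neg_one_pow_if, neg_one_pow_if]
        rcases lt_trichotomy u v with h | h | h
        · rw [if_neg (not_lt.mpr h.le), if_pos h]
          ring
        · exact absurd h huv
        · rw [if_pos h, if_neg (not_lt.mpr h.le)]
          ring
      · rw [if_neg hc, if_neg, mul_zero, neg_zero]
        rintro ⟨hu, hX2⟩
        refine hc ⟨fun hc2 => hu (Finset.mem_insert_of_mem hc2), ?_⟩
        rw [mem_linkv_iff]
        constructor
        · rwa [Finset.insert_comm] at hX2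
        · rw [Finset.mem_insert]
          push_neg
          exact ⟨fun h => huv h.symm, hvG⟩
  -- B component
  · show piB k v X (d+1) (chainBd k X (d+1) f) =
      jD k v X (d+1) (piA k v X (d+1) f) + chainBd k (delC v X) (d+1) (piB k v X (d+1+1) f)
    funext H
    have hvH : v ∉ H.1 := H.2.1.2
    rw [Pi.add_apply, piB_apply]; erw [chainBd_apply, chainBd_apply]
    rw [Finset.sum_eq_sum_sdiff_singleton_add (Finset.mem_univ v)]
    have hterm2v : (if v ∉ H.1 ∧ insert v H.1 ∈ delC v X then
        ((-1 : k) ^ (H.1.filter (· < v)).card) *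
          extc k (delC v X) (d+1+1) (piB k v X (d+1+1) f) (insert v H.1)
      else 0) = 0 := by
      rw [if_neg]
      rintro ⟨-, -, hc⟩
      exact hc (Finset.mem_insert_self v _)
    rw [Finset.sum_eq_sum_sdiff_singleton_add (Finset.mem_univ v), hterm2v, add_zero]
    have hmain : ∀ u ∈ Finset.univ \ {v},
        (if u ∉ H.1 ∧ insert u H.1 ∈ X then
          ((-1 : k) ^ (H.1.filter (· < u)).card) *
            extc k X (d+1+1) f (insert u H.1)
        else 0)
        = (if u ∉ H.1 ∧ insert u H.1 ∈ delC v X then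
          ((-1 : k) ^ (H.1.filter (· < u)).card) *
            extc k (delC v X) (d+1+1) (piB k v X (d+1+1) f) (insert u H.1)
        else 0) := by
      intro u hu
      have huv : u ≠ v := by
        rcases Finset.mem_sdiff.mp hu with ⟨-, h⟩
        simpa using h
      have hvins : v ∉ insert u H.1 := by
        rw [Finset.mem_insert]
        push_neg
        exact ⟨fun h => huv h.symm, hvH⟩
      by_cases hc : u ∉ H.1 ∧ insert u H.1 ∈ X
      · rw [if_pos hc, if_pos ⟨hc.1, hc.2, hvins⟩, extc_piB k v X _ _ _ hvins]
      · rw [if_neg hc, if_neg (fun hcc => hc ⟨hcc.1, hcc.2.1⟩)]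
    rw [Finset.sum_congr rfl hmain,
      add_comm (jD k v X (d+1) (piA k v X (d+1) f) H)]
    congr 1
    -- the u = v term equals the jD term
    rw [jD_extc, extc_piA k v X _ _ _ hvH]
    by_cases hc : insert v H.1 ∈ X
    · rw [if_pos ⟨hvH, hc⟩, epsv]
    · rw [if_neg (fun hcc => hc hcc.2), extc, dif_neg (fun hcc => hc hcc.1), mul_zero]

end ConeMaps

end BettiAux

-- ==================== abstract cone inequality ====================

namespace BettiAux

open LinearMap Module Submodule

section ConeIneq

variable {k : Type} [Field k]
variable {Am A0 A1 A2 B0 B1 B2 : Type}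
variable [AddCommGroup Am] [Module k Am] [AddCommGroup A0] [Module k A0]
variable [AddCommGroup A1] [Module k A1] [AddCommGroup A2] [Module k A2]
variable [AddCommGroup B0] [Module k B0] [AddCommGroup B1] [Module k B1]
variable [AddCommGroup B2] [Module k B2]
variable [FiniteDimensional k Am] [FiniteDimensional k A0] [FiniteDimensional k A1]
variable [FiniteDimensional k A2] [FiniteDimensional k B0] [FiniteDimensional k B1]
variable [FiniteDimensional k B2]

lemma cone_ineq
    (dA0 : A0 →ₗ[k] Am) (dA1 : A1 →ₗ[k] A0) (dA2 : A2 →ₗ[k] A1)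
    (dB1 : B1 →ₗ[k] B0) (dB2 : B2 →ₗ[k] B1)
    (j0 : A0 →ₗ[k] B0) (j1 : A1 →ₗ[k] B1) (j2 : A2 →ₗ[k] B2)
    (hA1 : dA1.comp dA2 = 0) (hA0 : dA0.comp dA1 = 0)
    (hB : dB1.comp dB2 = 0)
    (hj1 : dB1.comp j1 = j0.comp dA1) (hj2 : dB2.comp j2 = j1.comp dA2) :
    finrank k (ker dB1) - finrank k (range dB2) ≤
      (finrank k (ker dA1) - finrank k (range dA2)) +
      (finrank k (ker (LinearMap.prod ((-dA0).comp (LinearMap.fst k A0 B1))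
          ((j0.comp (LinearMap.fst k A0 B1)) + (dB1.comp (LinearMap.snd k A0 B1))))) -
        finrank k (range (LinearMap.prod ((-dA1).comp (LinearMap.fst k A1 B2))
          ((j1.comp (LinearMap.fst k A1 B2)) + (dB2.comp (LinearMap.snd k A1 B2)))))) := by
  set DX1 : (A0 × B1) →ₗ[k] (Am × B0) :=
    LinearMap.prod ((-dA0).comp (LinearMap.fst k A0 B1))
      ((j0.comp (LinearMap.fst k A0 B1)) + (dB1.comp (LinearMap.snd k A0 B1))) with hDX1
  set DX2 : (A1 × B2) →ₗ[k] (A0 × B1) :=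
    LinearMap.prod ((-dA1).comp (LinearMap.fst k A1 B2))
      ((j1.comp (LinearMap.fst k A1 B2)) + (dB2.comp (LinearMap.snd k A1 B2))) with hDX2
  have hDX1_apply : ∀ p : A0 × B1, DX1 p = (-(dA0 p.1), j0 p.1 + dB1 p.2) := fun p => rfl
  have hDX2_apply : ∀ p : A1 × B2, DX2 p = (-(dA1 p.1), j1 p.1 + dB2 p.2) := fun p => rfl
  have hA1' : ∀ a, dA1 (dA2 a) = 0 := fun a => LinearMap.congr_fun hA1 a
  have hA0' : ∀ a, dA0 (dA1 a) = 0 := fun a => LinearMap.congr_fun hA0 a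
  have hB' : ∀ b, dB1 (dB2 b) = 0 := fun b => LinearMap.congr_fun hB b
  have hj1' : ∀ a, dB1 (j1 a) = j0 (dA1 a) := fun a => LinearMap.congr_fun hj1 a
  have hj2' : ∀ a, dB2 (j2 a) = j1 (dA2 a) := fun a => LinearMap.congr_fun hj2 a
  set KB := ker dB1
  set IB := range dB2
  set KA := ker dA1
  set IA := range dA2
  set KX := ker DX1
  set IX := range DX2
  have hIBKB : IB ≤ KB := by
    rintro x ⟨y, rfl⟩
    exact hB' y
  have hIXKX : IX ≤ KX := by
    rintro x ⟨⟨a, b⟩, rfl⟩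
    show DX1 (DX2 (a, b)) = 0
    rw [hDX2_apply, hDX1_apply]
    have e1 : dA0 (-(dA1 a)) = 0 := by
      rw [map_neg, hA0' a, neg_zero]
    have e2 : j0 (-(dA1 a)) + dB1 (j1 a + dB2 b) = 0 := by
      rw [map_neg, map_add, hB' b, add_zero, hj1' a, neg_add_cancel]
    rw [Prod.mk_eq_zero]
    exact ⟨by rw [e1, neg_zero], e2⟩
  -- the subspace S
  set q : Submodule k B1 := Submodule.map j1 KA with hq
  set q' : Submodule k B1 := Submodule.map j1 IA with hq'
  set S : Submodule k B1 := IB ⊔ q with hS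
  have hqKB : q ≤ KB := by
    rintro x ⟨a, ha, rfl⟩
    show dB1 (j1 a) = 0
    rw [hj1' a]
    have : dA1 a = 0 := ha
    rw [this, map_zero]
  have hSKB : S ≤ KB := sup_le hIBKB hqKB
  -- the map φ : KB → KX ⧸ IX'
  set IX' : Submodule k KX := IX.comap KX.subtype with hIX'
  have hincl : ∀ x : KB, ((0 : A0), x.1) ∈ KX := by
    intro x
    show DX1 (0, x.1) = 0
    rw [hDX1_apply, Prod.mk_eq_zero]
    constructor
    · rw [map_zero, neg_zero]
    · rw [map_zero, zero_add]
      exact x.2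
  set φ : KB →ₗ[k] (KX ⧸ IX') :=
    (IX'.mkQ).comp (LinearMap.codRestrict KX ((LinearMap.inr k A0 B1).comp KB.subtype) hincl)
    with hφ
  have hkerφ : ker φ = S.comap KB.subtype := by
    ext x
    rw [hφ, LinearMap.mem_ker, LinearMap.comp_apply, ← LinearMap.mem_ker, Submodule.ker_mkQ,
      hIX', Submodule.mem_comap]
    have hval : (KX.subtype) ((LinearMap.codRestrict KX ((LinearMap.inr k A0 B1).comp KB.subtype) hincl) x) = ((0 : A0), x.1) := rfl
    rw [hval, Submodule.mem_comap]
    constructor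
    · rintro ⟨⟨a, b⟩, hab⟩
      rw [hDX2_apply] at hab
      have h1 : -(dA1 a) = 0 := congrArg Prod.fst hab
      have h2 : j1 a + dB2 b = x.1 := congrArg Prod.snd hab
      show x.1 ∈ S
      rw [hS]
      rw [← h2]
      refine Submodule.add_mem _ ?_ ?_
      · exact Submodule.mem_sup_right ⟨a, neg_eq_zero.mp h1, rfl⟩
      · exact Submodule.mem_sup_left ⟨b, rfl⟩
    · intro hx
      rw [hS] at hx
      rcases Submodule.mem_sup.mp hx with ⟨y, hy, z, hz, hyz⟩
      rcases hy with ⟨b, rfl⟩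
      rcases hz with ⟨a, ha, rfl⟩
      refine ⟨(a, b), ?_⟩
      rw [hDX2_apply]
      have : dA1 a = 0 := ha
      rw [this, neg_zero, add_comm, hyz]
      rfl
  -- dimension bookkeeping
  have e9 : finrank k (range φ) + finrank k (ker φ) = finrank k KB :=
    finrank_range_add_finrank_ker φ
  have e8 : finrank k (ker φ) = finrank k S := by
    rw [hkerφ]
    exact LinearEquiv.finrank_eq (Submodule.comapSubtypeEquivOfLe hSKB)
  have e10a : finrank k (KX ⧸ IX') + finrank k IX' = finrank k KX :=
    Submodule.finrank_quotient_add_finrank IX'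
  have e10b : finrank k IX' = finrank k IX :=
    LinearEquiv.finrank_eq (Submodule.comapSubtypeEquivOfLe hIXKX)
  have e10c : finrank k (range φ) ≤ finrank k (KX ⧸ IX') := Submodule.finrank_le _
  have e11 : finrank k ↥(IB ⊔ q) + finrank k ↥(IB ⊓ q) = finrank k IB + finrank k q :=
    Submodule.finrank_sup_add_finrank_inf_eq IB q
  rw [← hS] at e11
  -- rank-nullity for j1 restricted to KA and IA
  have e12 : finrank k q + finrank k (ker (j1.comp KA.subtype)) = finrank k KA := by
    have : range (j1.comp KA.subtype) = q := by
      rw [LinearMap.range_comp, Submodule.range_subtype]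
    rw [← this]
    exact finrank_range_add_finrank_ker (j1.comp KA.subtype)
  have e12' : finrank k q' + finrank k (ker (j1.comp IA.subtype)) = finrank k IA := by
    have : range (j1.comp IA.subtype) = q' := by
      rw [LinearMap.range_comp, Submodule.range_subtype]
    rw [← this]
    exact finrank_range_add_finrank_ker (j1.comp IA.subtype)
  have hIAKA : IA ≤ KA := by
    rintro x ⟨y, rfl⟩
    exact hA1' y
  have e13 : finrank k (ker (j1.comp IA.subtype)) ≤ finrank k (ker (j1.comp KA.subtype)) := by
    have hmem : ∀ c : ker (j1.comp IA.subtype),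
        ((Submodule.inclusion hIAKA).comp (ker (j1.comp IA.subtype)).subtype) c ∈
          ker (j1.comp KA.subtype) := by
      intro c
      have := c.2
      rw [LinearMap.mem_ker] at this ⊢
      exact this
    set fI := LinearMap.codRestrict (ker (j1.comp KA.subtype))
      ((Submodule.inclusion hIAKA).comp (ker (j1.comp IA.subtype)).subtype) hmem with hfI
    have hinj : Function.Injective fI := by
      intro x y hxy
      have : (fI x).1.1 = (fI y).1.1 := by rw [hxy]
      exact Subtype.ext (Subtype.ext this)
    exact LinearMap.finrank_le_finrank_of_injective hinj
  have e14 : finrank k q' ≤ finrank k ↥(IB ⊓ q) := by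
    refine Submodule.finrank_mono (le_inf ?_ (Submodule.map_mono hIAKA))
    rintro x ⟨a, ⟨y, rfl⟩, rfl⟩
    exact ⟨j2 y, hj2' y⟩
  have e15 : finrank k ↥(IB ⊓ q) ≤ finrank k q := Submodule.finrank_mono inf_le_right
  have e16 : finrank k IA ≤ finrank k KA := Submodule.finrank_mono hIAKA
  have e18 : finrank k IB ≤ finrank k KB := Submodule.finrank_mono hIBKB
  omega

end ConeIneq

section Conj

variable {k : Type} [Field k]

lemma finrank_conj {V W V' W' : Type}
    [AddCommGroup V] [Module k V] [AddCommGroup W] [Module k W]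
    [AddCommGroup V'] [Module k V'] [AddCommGroup W'] [Module k W']
    (e : V ≃ₗ[k] W) (e' : V' ≃ₗ[k] W') (f : V →ₗ[k] V') (g : W →ₗ[k] W')
    (h : e'.toLinearMap.comp f = g.comp e.toLinearMap) :
    Module.finrank k (LinearMap.ker f) = Module.finrank k (LinearMap.ker g) ∧
      Module.finrank k (LinearMap.range f) = Module.finrank k (LinearMap.range g) := by
  have hg : ∀ w, g w = e' (f (e.symm w)) := by
    intro w
    have h2 := LinearMap.congr_fun h (e.symm w)
    calc g w = g (e (e.symm w)) := by rw [e.apply_symm_apply]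
      _ = e' (f (e.symm w)) := h2.symm
  constructor
  · have h1 : LinearMap.ker g = Submodule.map (e : V →ₗ[k] W) (LinearMap.ker f) := by
      ext w
      constructor
      · intro hw
        have hw' : f (e.symm w) = 0 := by
          have h3 := hg w
          rw [LinearMap.mem_ker.mp hw] at h3
          exact (LinearEquiv.map_eq_zero_iff e').mp h3.symm
        exact ⟨e.symm w, hw', e.apply_symm_apply w⟩
      · rintro ⟨x, hx, rfl⟩
        show g (e x) = 0
        rw [hg, e.symm_apply_apply, LinearMap.mem_ker.mp hx, map_zero]
    rw [h1]
    exact (LinearEquiv.finrank_map_eq e _).symm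
  · have h2 : LinearMap.range g = Submodule.map (e' : V' →ₗ[k] W') (LinearMap.range f) := by
      ext w
      constructor
      · rintro ⟨x, rfl⟩
        exact ⟨f (e.symm x), ⟨e.symm x, rfl⟩, (hg x).symm⟩
      · rintro ⟨y, ⟨x, rfl⟩, rfl⟩
        refine ⟨e x, ?_⟩
        rw [hg, e.symm_apply_apply]
        rfl
    rw [h2]
    exact (LinearEquiv.finrank_map_eq e' _).symm

end Conj

end BettiAux

-- ==================== deletion inequality and main induction ====================

namespace BettiAux

open LinearMap Module Submodule

variable {n : ℕ}

lemma deletion_shift (k : Type) [Field k] (v : Fin n) (X : SComplex n)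
    (hX : IsSComplex X) (d : ℤ) :
    hred k (delC v X) (d+1) ≤ hred k (linkC {v} X) (d+1) + hred k X (d+1) := by
  have hA : IsSComplex (linkC {v} X) := isc_linkC hX
  have hB : IsSComplex (delC v X) := isc_delC hX
  have h1 := finrank_conj (eX k v X (d+1)) (eX k v X d) (chainBd k X (d+1))
    (DXm k v X d) (conj k v X hX d)
  have h2 := finrank_conj (eX k v X (d+1+1)) (eX k v X (d+1)) (chainBd k X (d+1+1))
    (DXm k v X (d+1)) (conj k v X hX (d+1))
  have hXval : hred k X (d+1) =
      finrank k (ker (DXm k v X d)) - finrank k (range (DXm k v X (d+1))) := by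
    rw [hred, h1.1, h2.2]
  have hmain := cone_ineq
    (chainBd k (linkC {v} X) d) (chainBd k (linkC {v} X) (d+1)) (chainBd k (linkC {v} X) (d+1+1))
    (chainBd k (delC v X) (d+1)) (chainBd k (delC v X) (d+1+1))
    (jD k v X (d+1)) (jD k v X (d+1+1)) (jD k v X (d+1+1+1))
    (sq_zero k _ hA (d+1)) (sq_zero k _ hA d) (sq_zero k _ hB (d+1))
    (jD_chain k v X hX (d+1)) (jD_chain k v X hX (d+1+1))
  have hD1 : (LinearMap.prod ((-(chainBd k (linkC {v} X) d)).comp (LinearMap.fst k _ _))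
      ((jD k v X (d+1)).comp (LinearMap.fst k _ _) +
        (chainBd k (delC v X) (d+1)).comp (LinearMap.snd k _ _))) = DXm k v X d := rfl
  have hD2 : (LinearMap.prod ((-(chainBd k (linkC {v} X) (d+1))).comp (LinearMap.fst k _ _))
      ((jD k v X (d+1+1)).comp (LinearMap.fst k _ _) +
        (chainBd k (delC v X) (d+1+1)).comp (LinearMap.snd k _ _))) = DXm k v X (d+1) := rfl
  rw [hD1, hD2] at hmain
  rw [hred, hred, hXval]
  exact hmain

lemma deletion (k : Type) [Field k] (v : Fin n) (X : SComplex n)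
    (hX : IsSComplex X) (i : ℤ) :
    hred k (delC v X) i ≤ hred k (linkC {v} X) i + hred k X i := by
  have h := deletion_shift k v X hX (i-1)
  have e : i - 1 + 1 = i := by ring
  rwa [e] at h

lemma hred_of_empty (k : Type) [Field k] (Y : SComplex n) (hY : ∀ F, F ∉ Y) (i : ℤ) :
    hred k Y i = 0 := by
  have hsub : ∀ m : ℤ, Subsingleton (Faces Y m → k) := fun m =>
    ⟨fun a b => funext fun x => absurd x.2.1 (hY x.1)⟩
  rw [hred]
  have h0 : finrank k (ker (chainBd k Y i)) = 0 := by
    haveI := hsub (i+1)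
    haveI : Subsingleton ↥(ker (chainBd k Y i)) :=
      ⟨fun a b => Subtype.ext (Subsingleton.elim _ _)⟩
    exact Module.finrank_zero_of_subsingleton
  omega

lemma linkC_not_face (X : SComplex n) (hX : IsSComplex X) (F : Finset (Fin n))
    (hF : F ∉ X) : ∀ G, G ∉ linkC F X := by
  intro G hG
  exact hF (hX _ hG.1 F Finset.subset_union_left)

lemma linkC_empty_face (X : SComplex n) : linkC ∅ X = X := by
  ext G
  simp [linkC]

lemma restC_univ (X : SComplex n) : restC X Finset.univ = X := by
  ext F
  simp [restC]

lemma restC_compl_insert (X : SComplex n) (v : Fin n) (c : Finset (Fin n)) :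
    restC X (insert v c)ᶜ = restC (delC v X) cᶜ := by
  ext F
  rw [mem_restC, mem_restC, mem_delC, Finset.compl_insert, Finset.subset_erase]
  tauto

lemma linkC_delC (X : SComplex n) (v : Fin n) (F : Finset (Fin n)) (hvF : v ∉ F) :
    linkC F (delC v X) = delC v (linkC F X) := by
  ext G
  rw [mem_linkC, mem_delC, mem_delC, mem_linkC, Finset.mem_union]
  tauto

lemma linkC_linkC (X : SComplex n) (v : Fin n) (F : Finset (Fin n)) (hvF : v ∉ F) :
    linkC {v} (linkC F X) = linkC (insert v F) X := by
  ext G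
  rw [mem_linkC, mem_linkC, mem_linkC]
  have h1 : F ∪ ({v} ∪ G) = insert v F ∪ G := by
    ext x
    simp only [Finset.mem_union, Finset.mem_insert, Finset.mem_singleton]
    tauto
  rw [h1]
  constructor
  · rintro ⟨⟨hU, hFin⟩, hvG⟩
    refine ⟨hU, ?_⟩
    ext x
    simp only [Finset.mem_inter, Finset.mem_insert, Finset.notMem_empty, iff_false]
    rintro ⟨hx1 | hx1, hx2⟩
    · subst hx1
      exact (Finset.eq_empty_iff_forall_notMem.mp hvG x)
        (Finset.mem_inter.mpr ⟨Finset.mem_singleton_self x, hx2⟩)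
    · exact (Finset.eq_empty_iff_forall_notMem.mp hFin x)
        (Finset.mem_inter.mpr ⟨hx1, Finset.mem_union.mpr (Or.inr hx2)⟩)
  · rintro ⟨hU, hIns⟩
    have hvG : v ∉ G := by
      intro hv
      exact (Finset.eq_empty_iff_forall_notMem.mp hIns v)
        (Finset.mem_inter.mpr ⟨Finset.mem_insert_self v F, hv⟩)
    refine ⟨⟨hU, ?_⟩, ?_⟩
    · ext x
      simp only [Finset.mem_inter, Finset.mem_union, Finset.mem_singleton,
        Finset.notMem_empty, iff_false]
      rintro ⟨hx1, hx2 | hx2⟩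
      · subst hx2
        exact hvF hx1
      · exact (Finset.eq_empty_iff_forall_notMem.mp hIns x)
          (Finset.mem_inter.mpr ⟨Finset.mem_insert_of_mem hx1, hx2⟩)
    · ext x
      simp only [Finset.mem_inter, Finset.mem_singleton, Finset.notMem_empty, iff_false]
      rintro ⟨hx1, hx2⟩
      subst hx1
      exact hvG hx2

lemma main_aux (k : Type) [Field k] (c : Finset (Fin n)) :
    ∀ (X : SComplex n), IsSComplex X → ∀ i : ℤ,
      hred k (restC X cᶜ) i ≤
        ∑ F ∈ Finset.univ.filter (fun F : Finset (Fin n) => F ∈ X ∧ F ∩ cᶜ = ∅),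
          hred k (linkC F X) i := by
  induction c using Finset.induction_on with
  | empty =>
    intro X hX i
    rw [Finset.compl_empty, restC_univ]
    by_cases h0 : (∅ : Finset (Fin n)) ∈ X
    · have hfil : Finset.univ.filter
          (fun F : Finset (Fin n) => F ∈ X ∧ F ∩ (Finset.univ : Finset (Fin n)) = ∅) = {∅} := by
        ext F
        simp only [Finset.mem_filter, Finset.mem_univ, true_and, Finset.mem_singleton,
          Finset.inter_univ]
        constructor
        · rintro ⟨-, h⟩; exact h
        · rintro rfl; exact ⟨h0, rfl⟩
      rw [hfil, Finset.sum_singleton, linkC_empty_face]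
    · have hnone : ∀ F, F ∉ X := by
        intro F hF
        exact h0 (hX F hF ∅ (Finset.empty_subset F))
      rw [hred_of_empty k X hnone i]
      exact Nat.zero_le _
  | @insert v c' hv ih =>
    intro X hX i
    have hY : IsSComplex (delC v X) := isc_delC hX
    rw [restC_compl_insert]
    refine le_trans (ih (delC v X) hY i) ?_
    set s := Finset.univ.filter
      (fun F : Finset (Fin n) => F ∈ delC v X ∧ F ∩ c'ᶜ = ∅) with hs
    set t := Finset.univ.filter
      (fun F : Finset (Fin n) => F ∈ X ∧ F ∩ (insert v c')ᶜ = ∅) with ht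
    -- termwise bound on s
    have hterm : ∀ F ∈ s, hred k (linkC F (delC v X)) i ≤
        hred k (linkC F X) i + hred k (linkC (insert v F) X) i := by
      intro F hF
      rw [hs, Finset.mem_filter] at hF
      obtain ⟨-, hFY, -⟩ := hF
      have hvF : v ∉ F := (mem_delC.mp hFY).2
      rw [linkC_delC X v F hvF]
      have hdel := deletion k v (linkC F X) (isc_linkC hX) i
      rw [linkC_linkC X v F hvF] at hdel
      omega
    refine le_trans (Finset.sum_le_sum hterm) ?_
    rw [Finset.sum_add_distrib]
    -- split t by membership of v
    have hsplit : ∑ F ∈ t.filter (fun F => v ∉ F), hred k (linkC F X) i +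
        ∑ F ∈ t.filter (fun F => ¬ (v ∉ F)), hred k (linkC F X) i =
        ∑ F ∈ t, hred k (linkC F X) i :=
      Finset.sum_filter_add_sum_filter_not t _ _
    have hs_eq : t.filter (fun F => v ∉ F) = s := by
      rw [ht, hs]
      ext F
      simp only [Finset.mem_filter, Finset.mem_univ, true_and, mem_delC,
        Finset.compl_insert]
      constructor
      · rintro ⟨⟨hFX, hcap⟩, hvF⟩
        refine ⟨⟨hFX, hvF⟩, ?_⟩
        ext x
        simp only [Finset.mem_inter, Finset.notMem_empty, iff_false]
        rintro ⟨hx1, hx2⟩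
        by_cases hxv : x = v
        · subst hxv; exact hvF hx1
        · exact (Finset.eq_empty_iff_forall_notMem.mp hcap x)
            (Finset.mem_inter.mpr ⟨hx1, Finset.mem_erase.mpr ⟨hxv, hx2⟩⟩)
      · rintro ⟨⟨hFX, hvF⟩, hcap⟩
        refine ⟨⟨hFX, ?_⟩, hvF⟩
        ext x
        simp only [Finset.mem_inter, Finset.notMem_empty, iff_false]
        rintro ⟨hx1, hx2⟩
        exact (Finset.eq_empty_iff_forall_notMem.mp hcap x)
          (Finset.mem_inter.mpr ⟨hx1, (Finset.mem_erase.mp hx2).2⟩)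
    -- second sum: only faces F with insert v F ∈ X contribute
    have hzero : ∀ F ∈ s.filter (fun F => insert v F ∉ X),
        hred k (linkC (insert v F) X) i = 0 := by
      intro F hF
      rw [Finset.mem_filter] at hF
      exact hred_of_empty k _ (linkC_not_face X hX _ hF.2) i
    have himg : ∑ F ∈ s, hred k (linkC (insert v F) X) i =
        ∑ F ∈ s.filter (fun F => insert v F ∈ X), hred k (linkC (insert v F) X) i := by
      rw [← Finset.sum_filter_add_sum_filter_not s (fun F => insert v F ∈ X)
        (fun F => hred k (linkC (insert v F) X) i)]
      rw [Finset.sum_congr rfl hzero, Finset.sum_const_zero, add_zero]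
    set s' := s.filter (fun F => insert v F ∈ X) with hs'
    have hvnotmem : ∀ F ∈ s', v ∉ F := by
      intro F hF
      rw [hs', Finset.mem_filter, hs, Finset.mem_filter] at hF
      exact (mem_delC.mp hF.1.2.1).2
    have hinj : ∀ F1 ∈ s', ∀ F2 ∈ s', insert v F1 = insert v F2 → F1 = F2 := by
      intro F1 h1 F2 h2 hEq
      have hv1 : v ∉ F1 := hvnotmem F1 h1
      have hv2 : v ∉ F2 := hvnotmem F2 h2
      have := congrArg (fun S : Finset (Fin n) => S.erase v) hEq
      simpa [Finset.erase_insert hv1, Finset.erase_insert hv2] using this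
    have hmap : ∑ F ∈ s', hred k (linkC (insert v F) X) i =
        ∑ H ∈ s'.image (fun F => insert v F), hred k (linkC H X) i :=
      (Finset.sum_image (f := fun H => hred k (linkC H X) i) hinj).symm
    have hsub : s'.image (fun F => insert v F) ⊆ t.filter (fun F => ¬ (v ∉ F)) := by
      intro H hH
      rcases Finset.mem_image.mp hH with ⟨F, hF, rfl⟩
      have hvF : v ∉ F := hvnotmem F hF
      rw [hs', Finset.mem_filter, hs, Finset.mem_filter] at hF
      obtain ⟨⟨-, -, hcap⟩, hins⟩ := hF
      rw [Finset.mem_filter, ht, Finset.mem_filter]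
      refine ⟨⟨Finset.mem_univ _, hins, ?_⟩, by simp⟩
      rw [Finset.compl_insert]
      ext x
      simp only [Finset.mem_inter, Finset.notMem_empty, iff_false]
      rintro ⟨hx1, hx2⟩
      rcases Finset.mem_insert.mp hx1 with h | h
      · subst h
        exact (Finset.mem_erase.mp hx2).1 rfl
      · exact (Finset.eq_empty_iff_forall_notMem.mp hcap x)
          (Finset.mem_inter.mpr ⟨h, (Finset.mem_erase.mp hx2).2⟩)
    have hle2 : ∑ H ∈ s'.image (fun F => insert v F), hred k (linkC H X) i ≤
        ∑ F ∈ t.filter (fun F => ¬ (v ∉ F)), hred k (linkC F X) i :=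
      Finset.sum_le_sum_of_subset hsub
    have hfirst : ∑ F ∈ s, hred k (linkC F X) i =
        ∑ F ∈ t.filter (fun F => v ∉ F), hred k (linkC F X) i := by
      rw [hs_eq]
    omega

end BettiAux

/-- combinatorial form of the Betti inequality:
`dim H̃_i(X_b) ≤ ∑_{F ∈ X, F ∩ supp b = ∅} dim H̃_i(lk(F, X))`. -/
theorem restriction_link_inequality {n : ℕ} (k : Type) [Field k] (X : SComplex n)
    (hX : IsSComplex X) (b : Finset (Fin n)) (i : ℤ) :
    hred k (restC X b) i ≤
      ∑ F ∈ Finset.univ.filter (fun F : Finset (Fin n) => F ∈ X ∧ F ∩ b = ∅),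
        hred k (linkC F X) i := by
  have h := BettiAux.main_aux k bᶜ X hX i
  rwa [compl_compl] at h
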